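/- Let λ > 0 and let x, y ≥ 0 satisfy √x + √y ≤ λ. Then the infimum of the Dirichlet energy (1/4)·∫₀^λ |g′(s)|² ds, taken over all absolutely continuous functions g : [0, λ] → ℝ with square-integrable derivative satisfying g(0) = x, g(λ) = y − λ², and g(s) ≥ −s² for all s ∈ [0, λ], is equal to E(x, y, λ) = (2/3)x^{3/2} + (λ − √y)²·√y + (1/3)(λ − √y)³, and this infimum is attained. -/

import Mathlib

open MeasureTheory

/-!
With `a = √x` and `c = λ - √y`, the minimiser follows the tangent to the parabola from `(0, x)`
to the point of tangency at `a`, runs along the parabola up to `c`, and leaves it along the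
tangent through the endpoint. Its slope is `ψ = -2 · clamp a c`. For a competitor with slope
`φ` and profile `g = x + ∫₀ˢ φ`, integrating by parts against the clamp gives
`∫ ψ (φ - ψ) = 2 ∫ₐᶜ (g - g_ψ) ≥ 0`: the two profiles share their endpoints, and `g_ψ` is the
parabola on `[a, c]`, below which `g` may not go. Expanding `∫ φ² = ∫ (ψ + (φ - ψ))²` then
shows that `ψ` has least energy.
-/

noncomputable def Efun (x y l : ℝ) : ℝ :=
  2 / 3 * x ^ (3 / 2 : ℝ) + (l - Real.sqrt y) ^ 2 * Real.sqrt y +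
    1 / 3 * (l - Real.sqrt y) ^ 3

open Set Filter Topology

noncomputable def clamp (a c s : ℝ) : ℝ := max a (min c s)

section Clamp

variable {a c s : ℝ}

lemma clamp_of_le_left (hs : s ≤ a) : clamp a c s = a := max_eq_left (min_le_of_right_le hs)

lemma clamp_of_mem_Icc (hs : s ∈ Icc a c) : clamp a c s = s := by
  rw [clamp, min_eq_right hs.2, max_eq_right hs.1]

lemma clamp_of_right_le (hac : a ≤ c) (hs : c ≤ s) : clamp a c s = c := by
  rw [clamp, min_eq_left hs, max_eq_right hac]

@[fun_prop]
lemma continuous_clamp : Continuous (clamp a c) := by unfold clamp; fun_prop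

-- Outside `[a, c]` the clamp is constant, so `F ∘ clamp` has to be continued by its tangent
-- line; right derivatives are enough for the fundamental theorem of calculus and avoid the kinks.
lemma hasDerivWithinAt_Ioi_comp_clamp {f F : ℝ → ℝ} (hac : a ≤ c)
    (hF : ∀ u, HasDerivAt F (f u) u) (s : ℝ) :
    HasDerivWithinAt (fun s => F (clamp a c s) + (s - clamp a c s) * f (clamp a c s))
      (f (clamp a c s)) (Ioi s) s := by
  have affine : ∀ b, HasDerivAt (fun u => F b + (u - b) * f b) (f b) s := fun b => by
    simpa using (((hasDerivAt_id s).sub_const b).mul_const (f b)).const_add (F b)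
  rcases lt_or_ge s a with hsa | has
  · rw [clamp_of_le_left hsa.le]
    refine ((affine a).congr_of_eventuallyEq ?_).hasDerivWithinAt
    filter_upwards [eventually_lt_nhds hsa] with u hu
    rw [clamp_of_le_left hu.le]
  rcases lt_or_ge s c with hsc | hcs
  · have hs : clamp a c s = s := clamp_of_mem_Icc ⟨has, hsc.le⟩
    rw [hs]
    refine (hF s).hasDerivWithinAt.congr_of_eventuallyEq ?_ (by simp [hs])
    filter_upwards [self_mem_nhdsWithin, nhdsWithin_le_nhds (eventually_lt_nhds hsc)]
      with u hsu huc
    simp [clamp_of_mem_Icc ⟨has.trans (hsu.le), huc.le⟩]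
  · rw [clamp_of_right_le hac hcs]
    refine (affine c).hasDerivWithinAt.congr_of_eventuallyEq ?_
      (by rw [clamp_of_right_le hac hcs])
    filter_upwards [self_mem_nhdsWithin] with u hu
    rw [clamp_of_right_le hac (hcs.trans (hu.le))]

lemma integral_comp_clamp {f F : ℝ → ℝ} (hac : a ≤ c) (hf : Continuous f)
    (hF : ∀ u, HasDerivAt F (f u) u) (p q : ℝ) :
    ∫ s in p..q, f (clamp a c s) =
      (F (clamp a c q) + (q - clamp a c q) * f (clamp a c q)) -
      (F (clamp a c p) + (p - clamp a c p) * f (clamp a c p)) := by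
  have hFc : Continuous F := continuous_iff_continuousAt.2 fun u => (hF u).continuousAt
  exact intervalIntegral.integral_eq_sub_of_hasDeriv_right (by fun_prop)
    (fun s _ => hasDerivWithinAt_Ioi_comp_clamp hac hF s)
    ((hf.comp continuous_clamp).intervalIntegrable p q)

lemma integral_clamp_mul_deriv {g : ℝ → ℝ} {p q : ℝ}
    (hg : AbsolutelyContinuousOnInterval g p q) (hpa : p ≤ a) (hac : a ≤ c) (hcq : c ≤ q) :
    ∫ s in p..q, clamp a c s * deriv g s = c * g q - a * g p - ∫ s in a..c, g s := by
  have hint : IntervalIntegrable (fun s => clamp a c s * deriv g s) volume p q :=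
    hg.intervalIntegrable_deriv.continuousOn_mul continuous_clamp.continuousOn
  have hpc : p ≤ c := hpa.trans hac
  have sub {u v : ℝ} (hpu : p ≤ u) (huv : u ≤ v) (hvq : v ≤ q) : uIcc u v ⊆ uIcc p q := by
    rw [uIcc_of_le huv, uIcc_of_le (hpu.trans (huv.trans hvq))]
    exact Icc_subset_Icc hpu hvq
  have left : ∫ s in p..a, clamp a c s * deriv g s = a * (g a - g p) := by
    rw [← (hg.mono (sub le_rfl hpa (hac.trans hcq))).integral_deriv_eq_sub,
      ← intervalIntegral.integral_const_mul]
    refine intervalIntegral.integral_congr fun s hs => ?_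
    rw [uIcc_of_le hpa] at hs
    simp only [clamp_of_le_left hs.2]
  have middle :
      ∫ s in a..c, clamp a c s * deriv g s = c * g c - a * g a - ∫ s in a..c, g s := by
    have hid : AbsolutelyContinuousOnInterval id a c :=
      LipschitzWith.id.lipschitzOnWith.absolutelyContinuousOnInterval
    have hclamp :
        EqOn (fun s => clamp a c s * deriv g s) (fun s => id s * deriv g s) (uIcc a c) :=
      fun s hs => by simp only [clamp_of_mem_Icc (uIcc_of_le hac ▸ hs), id]
    rw [intervalIntegral.integral_congr hclamp,
      hid.integral_mul_deriv_eq_deriv_mul (hg.mono (sub hpa hac hcq))]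
    simp
  have right : ∫ s in c..q, clamp a c s * deriv g s = c * (g q - g c) := by
    rw [← (hg.mono (sub hpc hcq le_rfl)).integral_deriv_eq_sub,
      ← intervalIntegral.integral_const_mul]
    refine intervalIntegral.integral_congr fun s hs => ?_
    rw [uIcc_of_le hcq] at hs
    simp only [clamp_of_right_le hac hs.1]
  rw [← intervalIntegral.integral_add_adjacent_intervals (b := a)
      (hint.mono_set (sub le_rfl hpa (hac.trans hcq)))
      (hint.mono_set (sub hpa (hac.trans hcq) le_rfl)),
    ← intervalIntegral.integral_add_adjacent_intervals (a := a) (b := c)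
      (hint.mono_set (sub hpa hac hcq)) (hint.mono_set (sub hpc hcq le_rfl)),
    left, middle, right]
  ring

lemma integral_clamp_mul {h : ℝ → ℝ} {p q : ℝ} (hh : IntervalIntegrable h volume p q)
    (hpa : p ≤ a) (hac : a ≤ c) (hcq : c ≤ q) :
    ∫ s in p..q, clamp a c s * h s = c * (∫ s in p..q, h s) - ∫ t in a..c, ∫ s in p..t, h s := by
  have hp : p ∈ uIcc p q := left_mem_uIcc
  have hderiv : ∀ᵐ s, s ∈ uIoc p q →
      clamp a c s * h s = clamp a c s * deriv (fun t => ∫ u in p..t, h u) s := by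
    filter_upwards [hh.ae_hasDerivAt_integral] with s hs hsI
    rw [(hs (uIoc_subset_uIcc hsI) p hp).deriv]
  rw [intervalIntegral.integral_congr_ae hderiv,
    integral_clamp_mul_deriv (hh.absolutelyContinuousOnInterval_intervalIntegral hp) hpa hac hcq]
  simp

end Clamp

lemma integral_sq_le_of_integral_mul_sub_nonneg {α : Type*} [MeasurableSpace α] {μ : Measure α}
    {f g : α → ℝ} (hf : MemLp f 2 μ) (hg : MemLp g 2 μ) (h : 0 ≤ ∫ x, g x * (f x - g x) ∂μ) :
    ∫ x, g x ^ 2 ∂μ ≤ ∫ x, f x ^ 2 ∂μ := by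
  have hcross : Integrable (fun x => g x * (f x - g x)) μ := hg.integrable_mul (hf.sub hg)
  calc ∫ x, g x ^ 2 ∂μ ≤ ∫ x, g x ^ 2 ∂μ + 2 * ∫ x, g x * (f x - g x) ∂μ := by linarith
    _ = ∫ x, (g x ^ 2 + 2 * (g x * (f x - g x))) ∂μ := by
      rw [integral_add hg.integrable_sq (hcross.const_mul 2), integral_const_mul]
    _ ≤ ∫ x, f x ^ 2 ∂μ := by
      refine integral_mono (hg.integrable_sq.add (hcross.const_mul 2)) hf.integrable_sq fun x => ?_
      nlinarith [sq_nonneg (f x - g x)]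

lemma integral_sq_const_mul_clamp_le {a c l κ : ℝ} (ha : 0 ≤ a) (hac : a ≤ c) (hcl : c ≤ l) (hκ : κ ≤ 0)
    {φ : ℝ → ℝ} (hφ : MemLp φ 2 (volume.restrict (Ioc 0 l)))
    (hend : ∫ s in (0 : ℝ)..l, φ s = ∫ s in (0 : ℝ)..l, κ * clamp a c s)
    (hdom : ∀ t ∈ Icc a c, ∫ s in (0 : ℝ)..t, κ * clamp a c s ≤ ∫ s in (0 : ℝ)..t, φ s) :
    ∫ s in (0 : ℝ)..l, (κ * clamp a c s) ^ 2 ≤ ∫ s in (0 : ℝ)..l, φ s ^ 2 := by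
  set ψ := fun s => κ * clamp a c s
  have hl : 0 ≤ l := ha.trans (hac.trans hcl)
  have hψc : Continuous ψ := by fun_prop
  have hψ : MemLp ψ 2 (volume.restrict (Ioc 0 l)) :=
    (memLp_two_iff_integrable_sq hψc.aestronglyMeasurable).2 (hψc.pow 2).integrableOn_Ioc
  have hφi : IntervalIntegrable φ volume 0 l :=
    (intervalIntegrable_iff_integrableOn_Ioc_of_le hl).2 (hφ.integrable one_le_two)
  have hprim_sub {t : ℝ} (ht : t ∈ Icc 0 l) :
      ∫ s in (0 : ℝ)..t, (φ s - ψ s) = (∫ s in (0 : ℝ)..t, φ s) - ∫ s in (0 : ℝ)..t, ψ s :=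
    intervalIntegral.integral_sub
      (hφi.mono_set (by rw [uIcc_of_le hl, uIcc_of_le ht.1]; exact Icc_subset_Icc le_rfl ht.2))
      (hψc.intervalIntegrable 0 t)
  have hgap : 0 ≤ ∫ t in a..c, ∫ s in (0 : ℝ)..t, (φ s - ψ s) :=
    intervalIntegral.integral_nonneg hac fun t ht => by
      rw [hprim_sub ⟨ha.trans ht.1, ht.2.trans hcl⟩]
      exact sub_nonneg.2 (hdom t ht)
  simp only [intervalIntegral.integral_of_le hl]
  refine integral_sq_le_of_integral_mul_sub_nonneg hφ hψ ?_
  rw [← intervalIntegral.integral_of_le hl]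
  simp only [mul_assoc, intervalIntegral.integral_const_mul]
  rw [integral_clamp_mul (hφi.sub (hψc.intervalIntegrable 0 l)) ha hac hcl,
    hprim_sub ⟨hl, le_rfl⟩, hend, sub_self, mul_zero, zero_sub]
  exact mul_nonneg_of_nonpos_of_nonpos hκ (neg_nonpos.2 hgap)

lemma integral_neg_two_mul_clamp {a c : ℝ} (hac : a ≤ c) (p q : ℝ) :
    ∫ s in p..q, -2 * clamp a c s =
      ((q - clamp a c q) ^ 2 - q ^ 2) - ((p - clamp a c p) ^ 2 - p ^ 2) := by
  have hF (u : ℝ) : HasDerivAt (fun u => -u ^ 2) (-2 * u) u :=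
    (hasDerivAt_pow 2 u).fun_neg.congr_deriv (by ring)
  rw [integral_comp_clamp (f := fun u => -2 * u) hac (by fun_prop) hF]
  ring

lemma integral_sq_neg_two_mul_clamp {a c : ℝ} (hac : a ≤ c) (p q : ℝ) :
    ∫ s in p..q, (-2 * clamp a c s) ^ 2 =
      4 / 3 * (clamp a c q ^ 2 * (3 * q - 2 * clamp a c q) -
        clamp a c p ^ 2 * (3 * p - 2 * clamp a c p)) := by
  have hF (u : ℝ) : HasDerivAt (fun u => 4 / 3 * u ^ 3) ((-2 * u) ^ 2) u :=
    ((hasDerivAt_pow 3 u).const_mul (4 / 3 : ℝ)).congr_deriv (by push_cast; ring)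
  rw [integral_comp_clamp (f := fun u => (-2 * u) ^ 2) hac (by fun_prop) hF]
  ring

theorem parabola_avoidance_energy_isLeast
    (l x y : ℝ) (hx : 0 ≤ x) (hy : 0 ≤ y)
    (hxy : Real.sqrt x + Real.sqrt y ≤ l) :
    IsLeast { e : ℝ | ∃ φ : ℝ → ℝ, Measurable φ ∧
        IntegrableOn (fun s => φ s ^ 2) (Set.Ioc 0 l) ∧
        (x + ∫ u in (0 : ℝ)..l, φ u) = y - l ^ 2 ∧
        (∀ s ∈ Set.Icc (0 : ℝ) l, -s ^ 2 ≤ x + ∫ u in (0 : ℝ)..s, φ u) ∧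
        e = 1 / 4 * ∫ s in (0 : ℝ)..l, φ s ^ 2 }
      (Efun x y l) := by
  set a := √x
  set c := l - √y
  have ha : 0 ≤ a := Real.sqrt_nonneg x
  have hax : a ^ 2 = x := Real.sq_sqrt hx
  have hcy : (l - c) ^ 2 = y := by rw [sub_sub_cancel]; exact Real.sq_sqrt hy
  have hac : a ≤ c := by linarith
  have hcl : c ≤ l := by linarith [Real.sqrt_nonneg y]
  have hclamp0 : clamp a c 0 = a := clamp_of_le_left ha
  have hclampl : clamp a c l = c := clamp_of_right_le hac hcl
  have hprim (s : ℝ) :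
      x + ∫ u in (0 : ℝ)..s, -2 * clamp a c u = (s - clamp a c s) ^ 2 - s ^ 2 := by
    rw [integral_neg_two_mul_clamp hac, hclamp0]
    linear_combination -hax
  have henergy : 1 / 4 * ∫ s in (0 : ℝ)..l, (-2 * clamp a c s) ^ 2 = Efun x y l := by
    rw [integral_sq_neg_two_mul_clamp hac, hclamp0, hclampl, Efun,
      Real.rpow_div_two_eq_sqrt 3 hx, Real.rpow_ofNat]
    ring
  refine ⟨⟨fun s => -2 * clamp a c s, by fun_prop, ?_, ?_, ?_, henergy.symm⟩, ?_⟩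
  · exact (by fun_prop : Continuous fun s => (-2 * clamp a c s) ^ 2).integrableOn_Ioc
  · rw [hprim, hclampl, hcy]
  · intro s _
    rw [hprim]
    nlinarith [sq_nonneg (s - clamp a c s)]
  · rintro e ⟨φ, hm, hsq, hbdry, hcon, rfl⟩
    rw [← henergy]
    gcongr
    refine integral_sq_const_mul_clamp_le ha hac hcl (by norm_num)
      ((memLp_two_iff_integrable_sq hm.aestronglyMeasurable).2 hsq) ?_ fun t ht => ?_
    · have := hprim l
      rw [hclampl, hcy] at this
      linarith
    · have := hprim t
      rw [clamp_of_mem_Icc ht, sub_self] at this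
      linarith [hcon t ⟨ha.trans ht.1, ht.2.trans hcl⟩]
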